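/- Let a : Fin n → ℤ be totally positive normalized and let D be a maximal R-order in Mₙ(K). Then Δ_0 ∩ Δ_a ⊆ D if and only if there exists d : Fin n → ℤ with d(0) = 0 and 0 ≤ d(i+1) − d(i) ≤ a(i+1) − a(i) for all 0 ≤ i ≤ n−2, such that D = Δ_d. (Split case, B = K, of the Lemma: the maximal orders containing the generalized Eichler order Δ₀ ∩ Δ_[b] are exactly the orders Δ_[c] with 0 ≤ c_i ≤ b_i for every i.) -/

import Mathlib

variable (R K : Type*) [CommRing R] [IsDomain R] [IsDiscreteValuationRing R]
  [Field K] [Algebra R K] [IsFractionRing R K]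

/-- The order `Δ_a` in `Mₙ(K)`: matrices `X` with `π^(a j - a i) * X i j ∈ R` for all `i, j`. -/
def Delta (π : R) {n : ℕ} (a : Fin n → ℤ) : Set (Matrix (Fin n) (Fin n) K) :=
  {X | ∀ i j, (algebraMap R K π) ^ (a j - a i) * X i j ∈ (algebraMap R K).range}

/-- An `R`-order in `Mₙ(K)`: an `R`-subalgebra, finitely generated as an `R`-module,
spanning `Mₙ(K)` over `K`. -/
def IsOrder {n : ℕ} (D : Subalgebra R (Matrix (Fin n) (Fin n) K)) : Prop :=
  (Subalgebra.toSubmodule D).FG ∧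
    Submodule.span K (D : Set (Matrix (Fin n) (Fin n) K)) = ⊤

/-- A maximal `R`-order in `Mₙ(K)`. -/
def IsMaximalOrder {n : ℕ} (D : Subalgebra R (Matrix (Fin n) (Fin n) K)) : Prop :=
  IsOrder R K D ∧ ∀ D' : Subalgebra R (Matrix (Fin n) (Fin n) K),
    IsOrder R K D' → D ≤ D' → D' = D

/-!
If `Δ₀ ∩ Δ_a ⊆ D`, then `D` contains the diagonal idempotents `E_ii`. The row sums in row `i` of
the elements of `D` then form a finitely generated fractional ideal `M_i = π^(c_i) R`, and
`X_ij M_j ⊆ M_i` for `X ∈ D` (look at `X E_jj Y`), so `D ⊆ Δ_c`; as `Δ_c` is an order, `D = Δ_c` by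
maximality. Testing `Δ₀ ∩ Δ_a ⊆ Δ_d` on `E_ij` and `π^(a_j - a_i) E_ji` for `i ≤ j` shows that it
holds iff `d` and `a - d` are both monotone, which is the condition on consecutive differences.
-/

lemma Fin.monotone_iff_le_add_one {α : Type*} [Preorder α] {n : ℕ} {f : Fin n → α} :
    Monotone f ↔ ∀ i : Fin (n - 1), f ⟨i, by omega⟩ ≤ f ⟨i + 1, by omega⟩ := by
  cases n with
  | zero => exact iff_of_true (fun i => i.elim0) fun i => i.elim0
  | succ m => exact Fin.monotone_iff_le_succ

lemma forall_step_nonneg_and_le_iff {n : ℕ} (d a : Fin n → ℤ) :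
    (∀ i : Fin (n - 1),
        0 ≤ d ⟨i.1 + 1, by have := i.2; omega⟩ - d ⟨i.1, by have := i.2; omega⟩ ∧
        d ⟨i.1 + 1, by have := i.2; omega⟩ - d ⟨i.1, by have := i.2; omega⟩ ≤
          a ⟨i.1 + 1, by have := i.2; omega⟩ - a ⟨i.1, by have := i.2; omega⟩) ↔
      Monotone d ∧ Monotone (a - d) := by
  simp only [Fin.monotone_iff_le_add_one, Pi.sub_apply, ← forall_and]
  exact forall_congr' fun i => by omega

section

variable {R K}
omit [IsDomain R] [IsDiscreteValuationRing R]

lemma algebraMap_ne_zero_of_irreducible {π : R} (hπ : Irreducible π) :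
    algebraMap R K π ≠ 0 := by
  simpa using hπ.ne_zero

lemma zpow_mem_range_iff {π : R} (hπ : Irreducible π) {m : ℤ} :
    algebraMap R K π ^ m ∈ (algebraMap R K).range ↔ 0 ≤ m := by
  refine ⟨fun ⟨r, hr⟩ => ?_, fun hm => ?_⟩
  · by_contra! hm
    obtain ⟨k, hk⟩ : ∃ k : ℕ, -m = k + 1 := ⟨(-m - 1).toNat, by omega⟩
    have hπ' := algebraMap_ne_zero_of_irreducible (K := K) hπ
    have : r * π ^ k * π = 1 := IsFractionRing.injective R K <| by
      rw [map_mul, map_mul, hr, map_pow, mul_assoc, ← zpow_natCast, ← zpow_add_one₀ hπ',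
        ← zpow_add₀ hπ', show m + (k + 1) = 0 by omega, zpow_zero, map_one]
    exact hπ.not_isUnit (.of_mul_eq_one_right _ this)
  · lift m to ℕ using hm
    exact ⟨π ^ m, by simp⟩

lemma mem_span_zpow_iff {π : R} (hπ : Irreducible π) {c : ℤ} {x : K} :
    x ∈ Submodule.span R {algebraMap R K π ^ c} ↔
      algebraMap R K π ^ (-c) * x ∈ (algebraMap R K).range := by
  have hπ' := algebraMap_ne_zero_of_irreducible (K := K) hπ
  simp only [Submodule.mem_span_singleton, RingHom.mem_range, Algebra.smul_def]
  refine exists_congr fun r => ?_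
  rw [zpow_neg, eq_inv_mul_iff_mul_eq₀ (zpow_ne_zero _ hπ'), mul_comm, eq_comm]

variable {n : ℕ}

lemma zpow_smul_single_mem_delta_iff {π : R} (hπ : Irreducible π) (c : Fin n → ℤ) (i j : Fin n)
    (m : ℤ) :
    algebraMap R K π ^ m • Matrix.single i j (1 : K) ∈ Delta R K π c ↔ c i - c j ≤ m := by
  have hπ' := algebraMap_ne_zero_of_irreducible (K := K) hπ
  have key : algebraMap R K π ^ (c j - c i) * algebraMap R K π ^ m ∈ (algebraMap R K).range ↔
      c i - c j ≤ m := by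
    rw [← zpow_add₀ hπ', zpow_mem_range_iff hπ]
    omega
  refine ⟨fun h => key.1 (by simpa using h i j), fun h k l => ?_⟩
  by_cases hkl : i = k ∧ j = l
  · obtain ⟨rfl, rfl⟩ := hkl
    simpa using key.2 h
  · simp [hkl]

omit [IsFractionRing R K] in
lemma diagonal_mem_delta {π : R} (c : Fin n → ℤ) {v : Fin n → K}
    (hv : ∀ i, v i ∈ (algebraMap R K).range) : Matrix.diagonal v ∈ Delta R K π c := by
  intro i j
  by_cases hij : i = j
  · subst hij
    simpa using hv i
  · simp [hij]

def deltaSubalgebra {π : R} (hπ : Irreducible π) (c : Fin n → ℤ) :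
    Subalgebra R (Matrix (Fin n) (Fin n) K) where
  carrier := Delta R K π c
  add_mem' {X Y} hX hY i j := by
    simpa [mul_add] using add_mem (hX i j) (hY i j)
  zero_mem' i j := by simp
  mul_mem' {X Y} hX hY i j := by
    have hπ' := algebraMap_ne_zero_of_irreducible (K := K) hπ
    rw [Matrix.mul_apply, Finset.mul_sum]
    refine sum_mem fun k _ => ?_
    convert mul_mem (hX i k) (hY k j) using 1
    rw [show c j - c i = (c k - c i) + (c j - c k) by ring, zpow_add₀ hπ']
    ring
  one_mem' := diagonal_mem_delta c fun _ => one_mem _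
  algebraMap_mem' r := by
    rw [Matrix.algebraMap_eq_diagonal]
    exact diagonal_mem_delta c fun _ => RingHom.mem_range_self _ r

lemma single_eq_smul_zpow_smul_single {π : R} (hπ : Irreducible π) (c : Fin n → ℤ)
    (i j : Fin n) (x : K) :
    Matrix.single i j x = (algebraMap R K π ^ (c j - c i) * x) •
      (algebraMap R K π ^ (c i - c j) • Matrix.single i j (1 : K)) := by
  rw [smul_smul, Matrix.smul_single, smul_eq_mul, mul_one, mul_right_comm,
    ← zpow_add₀ (algebraMap_ne_zero_of_irreducible hπ), sub_add_sub_cancel, sub_self, zpow_zero,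
    one_mul]

lemma toSubmodule_deltaSubalgebra {π : R} (hπ : Irreducible π) (c : Fin n → ℤ) :
    Subalgebra.toSubmodule (deltaSubalgebra (K := K) hπ c) =
      Submodule.span R (Set.range fun p : Fin n × Fin n =>
        algebraMap R K π ^ (c p.1 - c p.2) • Matrix.single p.1 p.2 (1 : K)) := by
  refine le_antisymm (fun X hX => ?_) (Submodule.span_le.2 <| Set.range_subset_iff.2 fun p =>
    (zpow_smul_single_mem_delta_iff hπ c _ _ _).2 le_rfl)
  rw [Matrix.matrix_eq_sum_single X]
  refine Submodule.sum_mem _ fun i _ => Submodule.sum_mem _ fun j _ => ?_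
  obtain ⟨r, hr⟩ := hX i j
  rw [single_eq_smul_zpow_smul_single hπ c, ← hr, algebraMap_smul]
  exact Submodule.smul_mem _ r (Submodule.subset_span ⟨(i, j), rfl⟩)

lemma isOrder_deltaSubalgebra {π : R} (hπ : Irreducible π) (c : Fin n → ℤ) :
    IsOrder R K (deltaSubalgebra hπ c) := by
  refine ⟨toSubmodule_deltaSubalgebra (K := K) hπ c ▸ Submodule.fg_span (Set.finite_range _),
    eq_top_iff.2 fun X _ => ?_⟩
  rw [Matrix.matrix_eq_sum_single X]
  refine Submodule.sum_mem _ fun i _ => Submodule.sum_mem _ fun j _ => ?_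
  rw [single_eq_smul_zpow_smul_single hπ c]
  exact Submodule.smul_mem _ _ <| Submodule.subset_span <|
    (zpow_smul_single_mem_delta_iff hπ c i j _).2 le_rfl

omit [IsFractionRing R K] in
lemma delta_sub_const (π : R) (c : Fin n → ℤ) (t : ℤ) :
    Delta R K π (fun i => c i - t) = Delta R K π c := by
  simp only [Delta, sub_sub_sub_cancel_right]

lemma inter_delta_subset_delta_iff {π : R} (hπ : Irreducible π) {a : Fin n → ℤ}
    (ha : Monotone a) (d : Fin n → ℤ) :
    Delta R K π 0 ∩ Delta R K π a ⊆ Delta R K π d ↔ Monotone d ∧ Monotone (a - d) := by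
  have mem_inter {i j : Fin n} {m : ℤ} (h₀ : 0 ≤ m) (hm : a i - a j ≤ m) :
      algebraMap R K π ^ m • Matrix.single i j (1 : K) ∈ Delta R K π 0 ∩ Delta R K π a :=
    ⟨(zpow_smul_single_mem_delta_iff hπ 0 i j m).2 (by simpa using h₀),
      (zpow_smul_single_mem_delta_iff hπ a i j m).2 hm⟩
  constructor
  · intro h
    refine ⟨fun i j hij => ?_, fun i j hij => ?_⟩
    · have := (zpow_smul_single_mem_delta_iff hπ d i j 0).1
        (h (mem_inter le_rfl (by linarith [ha hij])))
      linarith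
    · have := (zpow_smul_single_mem_delta_iff hπ d j i (a j - a i)).1
        (h (mem_inter (by linarith [ha hij]) le_rfl))
      simp only [Pi.sub_apply]
      linarith
  · rintro ⟨hd, had⟩ X ⟨hX₀, hXa⟩ i j
    have hX : X i j ∈ (algebraMap R K).range := by simpa using hX₀ i j
    rcases le_total i j with hij | hji
    · exact mul_mem ((zpow_mem_range_iff hπ).2 (by linarith [hd hij])) hX
    · have := had hji
      simp only [Pi.sub_apply] at this
      rw [show d j - d i = (d j - d i - (a j - a i)) + (a j - a i) by ring,
        zpow_add₀ (algebraMap_ne_zero_of_irreducible hπ), mul_assoc]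
      exact mul_mem ((zpow_mem_range_iff hπ).2 (by linarith)) (hXa i j)

section

omit [IsFractionRing R K]

def rowSumSubmodule (D : Subalgebra R (Matrix (Fin n) (Fin n) K)) (i : Fin n) :
    Submodule R K :=
  (Subalgebra.toSubmodule D).map (∑ j, Matrix.entryLinearMap R K i j)

lemma mem_rowSumSubmodule {D : Subalgebra R (Matrix (Fin n) (Fin n) K)} {i : Fin n} {x : K} :
    x ∈ rowSumSubmodule D i ↔ ∃ X ∈ D, ∑ j, X i j = x := by
  simp [rowSumSubmodule]

lemma one_mem_rowSumSubmodule {D : Subalgebra R (Matrix (Fin n) (Fin n) K)} {i : Fin n}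
    (h : Matrix.single i i 1 ∈ D) : 1 ∈ rowSumSubmodule D i :=
  mem_rowSumSubmodule.2 ⟨_, h, by simp [Matrix.single_apply]⟩

lemma mul_mem_rowSumSubmodule {D : Subalgebra R (Matrix (Fin n) (Fin n) K)}
    {X : Matrix (Fin n) (Fin n) K} (hX : X ∈ D) (i : Fin n) {j : Fin n}
    (hj : Matrix.single j j 1 ∈ D) {x : K} (hx : x ∈ rowSumSubmodule D j) :
    X i j * x ∈ rowSumSubmodule D i := by
  obtain ⟨Y, hY, rfl⟩ := mem_rowSumSubmodule.1 hx
  refine mem_rowSumSubmodule.2 ⟨X * Matrix.single j j 1 * Y, D.mul_mem (D.mul_mem hX hj) hY, ?_⟩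
  have entry (k : Fin n) : (X * Matrix.single j j (1 : K) * Y) i k = X i j * Y j k := by
    rw [Matrix.mul_assoc, Matrix.mul_apply, Finset.sum_eq_single j (fun l _ hl => by simp [hl])
      (by simp), Matrix.single_mul_apply_same, one_mul]
  simp only [entry, Finset.mul_sum]

end

end

section

variable {R K} {n : ℕ}

lemma exists_eq_span_zpow_of_fg {π : R} (hπ : Irreducible π) {M : Submodule R K} (hM : M.FG)
    (hM₀ : M ≠ ⊥) : ∃ c : ℤ, M = Submodule.span R {algebraMap R K π ^ c} := by
  have : M.IsPrincipal := FractionalIdeal.isPrincipal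
    (⟨M, FractionalIdeal.isFractional_of_fg hM⟩ : FractionalIdeal (nonZeroDivisors R) K)
  have hx : Submodule.IsPrincipal.generator M ≠ 0 := by
    rwa [Ne, ← Submodule.IsPrincipal.eq_bot_iff_generator_eq_zero]
  obtain ⟨c, u, hu⟩ := IsDiscreteValuationRing.exists_units_eq_smul_zpow_of_irreducible hπ hx
  exact ⟨c, by rw [← Submodule.IsPrincipal.span_singleton_generator M, hu,
    Submodule.span_singleton_group_smul_eq]⟩

lemma exists_le_deltaSubalgebra {π : R} (hπ : Irreducible π)
    {D : Subalgebra R (Matrix (Fin n) (Fin n) K)} (hD : (Subalgebra.toSubmodule D).FG)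
    (hdiag : ∀ i, Matrix.single i i 1 ∈ D) : ∃ c, D ≤ deltaSubalgebra hπ c := by
  choose c hc using fun i =>
    exists_eq_span_zpow_of_fg (M := rowSumSubmodule D i) hπ (hD.map _) <|
      (Submodule.ne_bot_iff _).2 ⟨1, one_mem_rowSumSubmodule (hdiag i), one_ne_zero⟩
  refine ⟨c, fun X hX i j => ?_⟩
  have hπc : algebraMap R K π ^ c j ∈ rowSumSubmodule D j :=
    hc j ▸ Submodule.mem_span_singleton_self _
  have := mul_mem_rowSumSubmodule hX i (hdiag j) hπc
  rw [hc i, mem_span_zpow_iff hπ] at this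
  convert this using 1
  rw [sub_eq_neg_add, zpow_add₀ (algebraMap_ne_zero_of_irreducible hπ)]
  ring

lemma IsMaximalOrder.exists_eq_delta {π : R} (hπ : Irreducible π)
    {D : Subalgebra R (Matrix (Fin n) (Fin n) K)} (hD : IsMaximalOrder R K D)
    (hdiag : ∀ i, Matrix.single i i 1 ∈ D) :
    ∃ c, (D : Set (Matrix (Fin n) (Fin n) K)) = Delta R K π c := by
  obtain ⟨c, hc⟩ := exists_le_deltaSubalgebra hπ hD.1.1 hdiag
  exact ⟨c, by rw [← hD.2 _ (isOrder_deltaSubalgebra hπ c) hc]; rfl⟩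

end

/-- For totally positive normalized `a`, the maximal `R`-orders containing the
generalized Eichler order `Δ_0 ∩ Δ_a` are exactly the `Δ_d` with `d 0 = 0` and
`0 ≤ d (i+1) - d i ≤ a (i+1) - a i` for all `i`. -/
theorem stmt4 (π : R) (hπ : Irreducible π) (n : ℕ) (hn : 1 ≤ n)
    (a : Fin n → ℤ) (hmono : Monotone a)
    (D : Subalgebra R (Matrix (Fin n) (Fin n) K)) (hD : IsMaximalOrder R K D) :
    Delta R K π (0 : Fin n → ℤ) ∩ Delta R K π a ⊆ (D : Set (Matrix (Fin n) (Fin n) K)) ↔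
    ∃ d : Fin n → ℤ, d ⟨0, hn⟩ = 0 ∧
      (∀ i : Fin (n - 1),
        0 ≤ d ⟨i.1 + 1, by have := i.2; omega⟩ - d ⟨i.1, by have := i.2; omega⟩ ∧
        d ⟨i.1 + 1, by have := i.2; omega⟩ - d ⟨i.1, by have := i.2; omega⟩ ≤
          a ⟨i.1 + 1, by have := i.2; omega⟩ - a ⟨i.1, by have := i.2; omega⟩) ∧
      (D : Set (Matrix (Fin n) (Fin n) K)) = Delta R K π d := by
  simp only [forall_step_nonneg_and_le_iff]
  constructor
  · intro hsub
    have hdiag (i : Fin n) : Matrix.single i i 1 ∈ D := hsub <| by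
      simpa using Set.mem_inter
        ((zpow_smul_single_mem_delta_iff (K := K) hπ 0 i i 0).2 (by simp))
        ((zpow_smul_single_mem_delta_iff hπ a i i 0).2 (by simp))
    obtain ⟨c, hc⟩ := hD.exists_eq_delta hπ hdiag
    have hDd : (D : Set _) = Delta R K π fun i => c i - c ⟨0, hn⟩ :=
      hc.trans (delta_sub_const π c _).symm
    exact ⟨_, sub_self _, (inter_delta_subset_delta_iff hπ hmono _).1 (hDd ▸ hsub), hDd⟩
  · rintro ⟨d, -, hd, hDd⟩
    exact hDd ▸ (inter_delta_subset_delta_iff hπ hmono d).2 hd
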